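/- Let γ : [0,1] → 𝕊² be C² with |γ'| = 1 and κ(θ) = ⟨γ''(θ),(γ×γ')(θ)⟩ ≥ c > 0, and let K, λ, δ be as before with λ ≤ K⁻¹ small. There is a constant C such that: for θ ∈ [0,1] and Δ with Cλ ≤ Δ ≤ C⁻¹, and all a ∈ [λ/2, λ], b ∈ [K⁻¹, 1], one has |⟨γ'(θ+Δ), a γ'(θ) + b (γ×γ')(θ)⟩| ≥ 10λ. -/

import Mathlib

/-!
Let `N = γ(θ) × γ'(θ)`. The function `t ↦ ⟪γ'(t), N⟫` vanishes at `t = θ`, and its derivative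
`⟪γ''(t), N⟫` is at least `c` at `t = θ`, hence at least `c / 2` on a window of uniform width
(uniform continuity of `γ''` on `[0, 1]`). So `⟪γ'(θ + Δ), N⟫ ≥ cΔ / 2 ≥ 11 K λ` once `Δ ≥ Cλ`,
and the `b`-term, at least `11λ`, dominates the `a`-term, which is at most `λ` in size.
-/

noncomputable section
open Set MeasureTheory
open scoped ENNReal

abbrev E3 := EuclideanSpace ℝ (Fin 3)

/-- Cross product on `ℝ³`. -/
def cross3 (a b : E3) : E3 :=
  (EuclideanSpace.equiv (Fin 3) ℝ).symm
    ![a 1 * b 2 - a 2 * b 1, a 2 * b 0 - a 0 * b 2, a 0 * b 1 - a 1 * b 0]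

/-- Determinant of the 3×3 matrix with columns `a, b, c`. -/
def det3 (a b c : E3) : ℝ :=
  Matrix.det !![a 0, b 0, c 0; a 1, b 1, c 1; a 2, b 2, c 2]

open Matrix

lemma cross3_eq_crossProduct (a b : E3) :
    cross3 a b = WithLp.toLp 2 (WithLp.ofLp a ⨯₃ WithLp.ofLp b) := rfl

lemma real_inner_eq_dotProduct (x y : E3) :
    (inner ℝ x y : ℝ) = WithLp.ofLp x ⬝ᵥ WithLp.ofLp y := by
  simp [EuclideanSpace.inner_eq_star_dotProduct, dotProduct_comm]

lemma inner_cross3_right_self (u v : E3) : (inner ℝ v (cross3 u v) : ℝ) = 0 := by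
  rw [real_inner_eq_dotProduct, cross3_eq_crossProduct, dot_cross_self]

lemma norm_cross3_le (u v : E3) : ‖cross3 u v‖ ≤ ‖u‖ * ‖v‖ := by
  have hsq : ‖cross3 u v‖ ^ 2 ≤ (‖u‖ * ‖v‖) ^ 2 := by
    rw [mul_pow, ← real_inner_self_eq_norm_sq, ← real_inner_self_eq_norm_sq,
      ← real_inner_self_eq_norm_sq]
    simp only [real_inner_eq_dotProduct, cross3_eq_crossProduct, cross_dot_cross]
    rw [dotProduct_comm (WithLp.ofLp v) (WithLp.ofLp u)]
    nlinarith [sq_nonneg (WithLp.ofLp u ⬝ᵥ WithLp.ofLp v)]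
  exact (sq_le_sq₀ (norm_nonneg _) (by positivity)).1 hsq

lemma exists_half_le_inner_of_uniformContinuousOn {α E : Type*} [PseudoMetricSpace α]
    [NormedAddCommGroup E] [InnerProductSpace ℝ E] {S : Set α} {g u : α → E} {c : ℝ}
    (hg : UniformContinuousOn g S) (hc : 0 < c) (hu : ∀ x ∈ S, ‖u x‖ ≤ 1)
    (hgu : ∀ x ∈ S, c ≤ (inner ℝ (g x) (u x) : ℝ)) :
    ∃ δ > 0, ∀ x ∈ S, ∀ y ∈ S, dist y x < δ → c / 2 ≤ (inner ℝ (g y) (u x) : ℝ) := by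
  obtain ⟨δ, hδ, hclose⟩ := Metric.uniformContinuousOn_iff.mp hg (c / 2) (half_pos hc)
  refine ⟨δ, hδ, fun x hx y hy hxy => ?_⟩
  have hdiff : |(inner ℝ (g y - g x) (u x) : ℝ)| ≤ c / 2 :=
    calc |(inner ℝ (g y - g x) (u x) : ℝ)| ≤ ‖g y - g x‖ * ‖u x‖ := abs_real_inner_le_norm _ _
      _ ≤ c / 2 * 1 := by
        rw [← dist_eq_norm]
        gcongr
        exacts [(hclose y hy x hx hxy).le, hu x hx]
      _ = c / 2 := mul_one _
  rw [inner_sub_left] at hdiff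
  linarith [(abs_le.mp hdiff).1, hgu x hx]

lemma mul_sub_le_inner_sub_of_le_inner_deriv {E : Type*} [NormedAddCommGroup E]
    [InnerProductSpace ℝ E] {h : ℝ → E} (hh : Differentiable ℝ h) (v : E) {m x y : ℝ}
    (hxy : x ≤ y) (hm : ∀ s ∈ Icc x y, m ≤ (inner ℝ (deriv h s) v : ℝ)) :
    m * (y - x) ≤ (inner ℝ (h y) v : ℝ) - inner ℝ (h x) v := by
  have hderiv : ∀ s, HasDerivAt (fun t => (inner ℝ (h t) v : ℝ)) (inner ℝ (deriv h s) v) s :=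
    fun s => by simpa using (hh s).hasDerivAt.inner ℝ (hasDerivAt_const s v)
  exact (convex_Icc x y).mul_sub_le_image_sub_of_le_deriv
    (fun s _ => (hderiv s).continuousAt.continuousWithinAt)
    (fun s _ => (hderiv s).differentiableAt.differentiableWithinAt)
    (fun s hs => (hderiv s).deriv ▸ hm s (interior_subset hs))
    x (left_mem_Icc.mpr hxy) y (right_mem_Icc.mpr hxy) hxy

lemma ten_mul_le_abs_mul_add_mul {a b x y K lam : ℝ} (ha : 0 ≤ a) (ha' : a ≤ lam)
    (hx : |x| ≤ 1) (hK : 0 < K) (hb : K⁻¹ ≤ b) (hy : 11 * K * lam ≤ y) :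
    10 * lam ≤ |a * x + b * y| := by
  have hlam : 0 ≤ lam := ha.trans ha'
  have hKlam : 0 ≤ 11 * K * lam := by positivity
  have hb0 : 0 ≤ b := (inv_pos.mpr hK).le.trans hb
  have hby : 11 * lam ≤ b * y :=
    calc 11 * lam = K⁻¹ * (11 * K * lam) := by field_simp
      _ ≤ b * y := by gcongr
  have hax : -lam ≤ a * x := by nlinarith [(abs_le.mp hx).1]
  exact le_abs.mpr (Or.inl (by linarith))

theorem plank_transversality_second_scenario
    (γ : ℝ → E3) (hγ : ContDiff ℝ 2 γ)
    (hsphere : ∀ θ ∈ Icc (0:ℝ) 1, ‖γ θ‖ = 1)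
    (hunit : ∀ θ ∈ Icc (0:ℝ) 1, ‖deriv γ θ‖ = 1)
    (c : ℝ) (hc : 0 < c)
    (hκ : ∀ θ ∈ Icc (0:ℝ) 1,
      c ≤ (inner ℝ (deriv (deriv γ) θ) (cross3 (γ θ) (deriv γ θ)) : ℝ))
    (K : ℝ) (hK : 1 ≤ K) :
    ∃ C : ℝ, 0 < C ∧ ∀ lam : ℝ, 0 < lam → lam ≤ K⁻¹ →
      ∀ θ Δ : ℝ, θ ∈ Icc (0:ℝ) 1 → θ + Δ ∈ Icc (0:ℝ) 1 →
      C * lam ≤ Δ → Δ ≤ C⁻¹ →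
      ∀ a b : ℝ, lam / 2 ≤ a → a ≤ lam → K⁻¹ ≤ b → b ≤ 1 →
        10 * lam ≤ |(inner ℝ (deriv γ (θ + Δ)) (a • deriv γ θ + b • cross3 (γ θ) (deriv γ θ)) : ℝ)| := by
  have hK0 : 0 < K := one_pos.trans_le hK
  have hγ' : Differentiable ℝ (deriv γ) :=
    ((hγ.iterate_deriv' 1 1).differentiable one_ne_zero :)
  have hγ'' : Continuous (deriv (deriv γ)) := (hγ.iterate_deriv' 0 2).continuous
  obtain ⟨δ, hδ, hnear⟩ := exists_half_le_inner_of_uniformContinuousOn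
    (isCompact_Icc.uniformContinuousOn_of_continuous hγ''.continuousOn) hc
    (fun θ hθ => (norm_cross3_le _ _).trans (by rw [hsphere θ hθ, hunit θ hθ, one_mul])) hκ
  refine ⟨max (22 * K / c) (2 / δ), by positivity, ?_⟩
  intro lam hlam _ θ Δ hθ hθΔ hΔlow hΔhigh a b ha ha' hb _
  have hCl : 22 * K / c * lam ≤ Δ :=
    (mul_le_mul_of_nonneg_right (le_max_left _ _) hlam.le).trans hΔlow
  have hΔ : 0 ≤ Δ := le_trans (by positivity) hCl
  have hΔδ : Δ < δ :=
    calc Δ ≤ (2 / δ)⁻¹ := hΔhigh.trans (inv_anti₀ (by positivity) (le_max_right _ _))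
      _ < δ := by rw [inv_div]; linarith
  have hgain : c / 2 * Δ ≤ (inner ℝ (deriv γ (θ + Δ)) (cross3 (γ θ) (deriv γ θ)) : ℝ) := by
    have h := mul_sub_le_inner_sub_of_le_inner_deriv hγ' (cross3 (γ θ) (deriv γ θ))
      (le_add_of_nonneg_right hΔ) fun s hs => hnear θ hθ s (Icc_subset_Icc hθ.1 hθΔ.2 hs) <| by
        rw [Real.dist_eq, abs_of_nonneg (by linarith [hs.1])]; linarith [hs.2]
    rwa [add_sub_cancel_left, inner_cross3_right_self, sub_zero] at h
  have hlarge : 11 * K * lam ≤ c / 2 * Δ :=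
    calc 11 * K * lam = c / 2 * (22 * K / c * lam) := by field_simp; ring
      _ ≤ c / 2 * Δ := by gcongr
  have htangent : |(inner ℝ (deriv γ (θ + Δ)) (deriv γ θ) : ℝ)| ≤ 1 :=
    (abs_real_inner_le_norm _ _).trans (by rw [hunit _ hθΔ, hunit _ hθ, one_mul])
  rw [inner_add_right, real_inner_smul_right, real_inner_smul_right]
  exact ten_mul_le_abs_mul_add_mul (by linarith) ha' htangent hK0 hb (hlarge.trans hgain)
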